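/- arXiv:2508.11842 — 2 statements merged into one kernel-verified Lean document; each statement's English description precedes it below -/
import Mathlib

section
/- In the balls-into-bins model where m balls are thrown independently and uniformly at random into n bins (n ≥ 2), for any two distinct bins i ≠ j, the probability that both bin i and bin j receive an odd number of balls equals (1/4) · (1 − 2(1 − 2/n)^m + (1 − 4/n)^m). -/
/-!
Write `N_S(ω)` for the number of balls landing in a set of bins `S`. Since the balls are independent,
`∑_ω (-1)^{N_S(ω)}` factors as `(∑_b ±1)^m = (n - 2|S|)^m`. The indicator of `N_i, N_j` both odd is
`(1 - (-1)^{N_i})(1 - (-1)^{N_j}) / 4`, and expanding it with `N_i + N_j = N_{i,j}` gives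
`(n^m - 2(n-2)^m + (n-4)^m) / 4` outcomes.
-/

open Finset

section

variable {α β : Type*} [Fintype α] [DecidableEq α]

theorem sum_prod_apply_eq_pow [Fintype β] {R : Type*} [CommSemiring R] (g : β → R) :
    ∑ ω : α → β, ∏ k, g (ω k) = (∑ b, g b) ^ Fintype.card α := by
  rw [← Fintype.prod_sum (fun (_ : α) b => g b), prod_const, card_univ]

theorem sum_neg_one_pow_card_preimage [Fintype β] [DecidableEq β] (S : Finset β) :
    ∑ ω : α → β, (-1 : ℤ) ^ #{k | ω k ∈ S} = (Fintype.card β - 2 * #S) ^ Fintype.card α := by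
  have hsign (ω : α → β) : (-1 : ℤ) ^ #{k | ω k ∈ S} = ∏ k, if ω k ∈ S then -1 else 1 := by
    rw [prod_ite, prod_const_one, mul_one, prod_const]
  have hsum : ∑ b, (if b ∈ S then (-1 : ℤ) else 1) = Fintype.card β - 2 * #S := by
    rw [sum_ite, sum_const, sum_const, filter_mem_eq_inter, univ_inter, filter_not,
      filter_mem_eq_inter, univ_inter, card_univ_sdiff, nsmul_eq_mul, nsmul_eq_mul,
      Nat.cast_sub (card_le_univ S)]
    ring
  simp only [hsign]
  rw [sum_prod_apply_eq_pow (fun b => if b ∈ S then (-1 : ℤ) else 1), hsum]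

theorem one_sub_neg_one_pow (a : ℕ) : 1 - (-1 : ℤ) ^ a = if Odd a then 2 else 0 := by
  rcases Nat.even_or_odd a with h | h
  · simp [h.neg_one_pow, Nat.not_odd_iff_even.mpr h]
  · simp [h.neg_one_pow, h]

theorem card_preimage_add_card_preimage [DecidableEq β] {i j : β} (hij : i ≠ j) (ω : α → β) :
    #{k | ω k = i} + #{k | ω k = j} = #{k | ω k ∈ ({i, j} : Finset β)} := by
  rw [← card_union_of_disjoint]
  · congr 1; ext k; simp
  · exact disjoint_filter.2 fun k _ hi hj => hij (hi ▸ hj)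

theorem four_mul_card_odd_odd [Fintype β] [DecidableEq β] {i j : β} (hij : i ≠ j) :
    4 * (#{ω : α → β | Odd #{k | ω k = i} ∧ Odd #{k | ω k = j}} : ℤ) =
      Fintype.card β ^ Fintype.card α - 2 * (Fintype.card β - 2) ^ Fintype.card α
        + (Fintype.card β - 4) ^ Fintype.card α := by
  have hind (ω : α → β) :
      (if Odd #{k | ω k = i} ∧ Odd #{k | ω k = j} then (4 : ℤ) else 0) =
        1 - (-1) ^ #{k | ω k ∈ ({i} : Finset β)} - (-1) ^ #{k | ω k ∈ ({j} : Finset β)}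
          + (-1) ^ #{k | ω k ∈ ({i, j} : Finset β)} := by
    rw [← card_preimage_add_card_preimage hij, pow_add]
    simp only [mem_singleton]
    calc _ = (1 - (-1 : ℤ) ^ #{k | ω k = i}) * (1 - (-1) ^ #{k | ω k = j}) := by
          rw [one_sub_neg_one_pow, one_sub_neg_one_pow]
          split_ifs <;> simp_all
      _ = _ := by ring
  rw [natCast_card_filter, mul_sum]
  simp only [mul_ite, mul_one, mul_zero, hind, sum_add_distrib, sum_sub_distrib,
    sum_neg_one_pow_card_preimage, sum_const, card_univ, Fintype.card_pi, prod_const,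
    Int.nsmul_eq_mul, card_singleton, card_pair hij]
  push_cast
  ring

end

theorem prob_two_bins_odd_general (m n : ℕ) (i j : Fin n) (hij : i ≠ j) :
    ((Finset.univ.filter (fun ω : Fin m → Fin n =>
        Odd (Finset.univ.filter (fun k => ω k = i)).card ∧
        Odd (Finset.univ.filter (fun k => ω k = j)).card)).card : ℝ) / (n : ℝ) ^ m =
      (1 / 4) * (1 - 2 * (1 - 2 / (n : ℝ)) ^ m + (1 - 4 / (n : ℝ)) ^ m) := by
  have hn : (n : ℝ) ≠ 0 := Nat.cast_ne_zero.mpr i.pos.ne'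
  have hcount : 4 * (#{ω : Fin m → Fin n | Odd #{k | ω k = i} ∧ Odd #{k | ω k = j}} : ℝ) =
      n ^ m - 2 * (n - 2) ^ m + (n - 4) ^ m := by
    have h := four_mul_card_odd_odd (α := Fin m) hij
    simp only [Fintype.card_fin] at h
    exact_mod_cast h
  rw [one_sub_div hn, one_sub_div hn, div_pow, div_pow]
  field_simp
  linear_combination hcount

/-- Balls-into-bins: `m` balls are thrown independently and uniformly at random into `n ≥ 2`
bins (an outcome is a function `ω : Fin m → Fin n`, all `n^m` outcomes equally likely).
For any two distinct bins `i ≠ j`, the probability that both bins receive an odd number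
of balls equals `(1/4) · (1 - 2(1 - 2/n)^m + (1 - 4/n)^m)`. -/
theorem prob_two_bins_odd (m n : ℕ) (hn : 2 ≤ n) (i j : Fin n) (hij : i ≠ j) :
    ((Finset.univ.filter (fun ω : Fin m → Fin n =>
        Odd (Finset.univ.filter (fun k => ω k = i)).card ∧
        Odd (Finset.univ.filter (fun k => ω k = j)).card)).card : ℝ) / (n : ℝ) ^ m =
      (1 / 4) * (1 - 2 * (1 - 2 / (n : ℝ)) ^ m + (1 - 4 / (n : ℝ)) ^ m) :=
  prob_two_bins_odd_general m n i j hij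
end

section
/- In the balls-into-bins model where m balls are thrown independently and uniformly at random into n bins (n ≥ 2), let z be the number of bins receiving an odd number of balls. Then the variance of z equals (n²/4) · ((1 − 4/n)^m − (1 − 2/n)^{2m}) + (n/4) · (1 − (1 − 4/n)^m). -/
/-!
The sign `(-1) ^ N_i` of bin `i` is a product over the balls of factors `±1`, so its sum over
all `n ^ m` outcomes factorises into `(n - 2) ^ m`; likewise, for `i ≠ k`, the sign
`(-1) ^ (N_i + N_k)` sums to `(n - 4) ^ m`. Since `z = (n - S) / 2` with `S = ∑ i, (-1) ^ N_i`,
the variance of `z` is a quarter of that of `S`, whose first two moments are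
`n (1 - 2/n) ^ m` and `n + n (n - 1) (1 - 4/n) ^ m`.
-/

open Finset

/-- In the balls-into-bins model (`m` balls thrown independently and uniformly at random
into `n` bins; an outcome is `ω : Fin m → Fin n`), `ballsOddBins m n ω` is the number of
bins receiving an odd number of balls. -/
def ballsOddBins (m n : ℕ) (ω : Fin m → Fin n) : ℕ :=
  (Finset.univ.filter (fun i : Fin n =>
      Odd (Finset.univ.filter (fun j => ω j = i)).card)).card

noncomputable def uniformVariance {β : Type*} [Fintype β] (f : β → ℝ) : ℝ :=
  (∑ x, f x ^ 2) / Fintype.card β - ((∑ x, f x) / Fintype.card β) ^ 2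

theorem uniformVariance_affine {β : Type*} [Fintype β] (f : β → ℝ) (a c : ℝ) :
    uniformVariance (fun x => a * f x + c) = a ^ 2 * uniformVariance f := by
  rcases isEmpty_or_nonempty β with hβ | hβ
  · simp [uniformVariance]
  have hcard : (Fintype.card β : ℝ) ≠ 0 := by positivity
  have hsq : ∑ x, (a * f x + c) ^ 2
      = a ^ 2 * ∑ x, f x ^ 2 + 2 * a * c * ∑ x, f x + c ^ 2 * Fintype.card β := by
    rw [← sum_congr rfl fun x _ => (by ring : a ^ 2 * f x ^ 2 + 2 * a * c * f x + c ^ 2 = _)]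
    simp only [sum_add_distrib, ← mul_sum, sum_const, card_univ, nsmul_eq_mul]
    ring
  rw [uniformVariance, uniformVariance, hsq, sum_add_distrib, ← mul_sum, sum_const, card_univ,
    nsmul_eq_mul]
  field_simp
  ring

section ParitySign

variable {ι α : Type*} [Fintype ι] [DecidableEq α]

def paritySign (s : Finset α) (ω : ι → α) : ℝ :=
  (-1) ^ #{j | ω j ∈ s}

theorem paritySign_eq_prod (s : Finset α) (ω : ι → α) :
    paritySign s ω = ∏ j, if ω j ∈ s then -1 else 1 := by
  rw [paritySign, card_filter, ← prod_pow_eq_pow_sum]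
  exact prod_congr rfl fun j _ => by split_ifs <;> simp

theorem paritySign_mul (s t : Finset α) (ω : ι → α) :
    paritySign s ω * paritySign t ω = paritySign (symmDiff s t) ω := by
  simp only [paritySign_eq_prod, ← prod_mul_distrib, mem_symmDiff]
  exact prod_congr rfl fun j _ => by split_ifs <;> simp_all

variable [Fintype α]

theorem sum_ite_mem_neg_one (s : Finset α) :
    ∑ x : α, (if x ∈ s then (-1 : ℝ) else 1) = Fintype.card α - 2 * #s := by
  have h (x : α) : (if x ∈ s then (-1 : ℝ) else 1) = 1 - 2 * if x ∈ s then 1 else 0 := by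
    split_ifs <;> ring
  simp only [h, sum_sub_distrib, ← mul_sum, sum_boole, filter_mem_eq_inter, univ_inter]
  simp

theorem sum_paritySign [DecidableEq ι] (s : Finset α) :
    ∑ ω : ι → α, paritySign s ω = (Fintype.card α - 2 * #s) ^ Fintype.card ι := by
  simp only [paritySign_eq_prod]
  rw [← Fintype.prod_sum fun _ x => if x ∈ s then (-1 : ℝ) else 1, prod_const, card_univ,
    sum_ite_mem_neg_one]

theorem card_symmDiff_singleton (i k : α) :
    #(symmDiff {i} {k} : Finset α) = if i = k then 0 else 2 := by
  split_ifs with h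
  · simp [h]
  · rw [(disjoint_singleton.mpr h).symmDiff_eq_sup]
    exact card_pair h

variable [DecidableEq ι]

theorem sum_paritySign_singleton_mul (i k : α) :
    ∑ ω : ι → α, paritySign {i} ω * paritySign {k} ω =
      if i = k then (Fintype.card α : ℝ) ^ Fintype.card ι
      else (Fintype.card α - 4 : ℝ) ^ Fintype.card ι := by
  simp only [paritySign_mul, sum_paritySign, card_symmDiff_singleton]
  split_ifs <;> norm_num

theorem sum_sum_paritySign_singleton :
    ∑ ω : ι → α, ∑ i, paritySign {i} ω =
      Fintype.card α * (Fintype.card α - 2 : ℝ) ^ Fintype.card ι := by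
  rw [sum_comm]
  simp [sum_paritySign]

theorem sum_sq_sum_paritySign_singleton :
    ∑ ω : ι → α, (∑ i, paritySign {i} ω) ^ 2 =
      Fintype.card α * (Fintype.card α : ℝ) ^ Fintype.card ι +
        Fintype.card α * (Fintype.card α - 1) * (Fintype.card α - 4 : ℝ) ^ Fintype.card ι := by
  have hrow (i : α) : ∑ k, ∑ ω : ι → α, paritySign {i} ω * paritySign {k} ω =
      (Fintype.card α : ℝ) ^ Fintype.card ι +
        (Fintype.card α - 1) * (Fintype.card α - 4 : ℝ) ^ Fintype.card ι := by
    have hsplit (k : α) : (if i = k then (Fintype.card α : ℝ) ^ Fintype.card ι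
        else (Fintype.card α - 4 : ℝ) ^ Fintype.card ι) =
          (Fintype.card α - 4 : ℝ) ^ Fintype.card ι + if i = k then
            (Fintype.card α : ℝ) ^ Fintype.card ι - (Fintype.card α - 4 : ℝ) ^ Fintype.card ι
          else 0 := by
      split_ifs <;> ring
    simp only [sum_paritySign_singleton_mul, hsplit, sum_add_distrib, sum_ite_eq, mem_univ,
      if_true, sum_const, card_univ, nsmul_eq_mul]
    ring
  simp only [sq, sum_mul_sum]
  rw [sum_comm, sum_congr rfl fun i _ => sum_comm.trans (hrow i), sum_const, card_univ,
    nsmul_eq_mul]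
  ring

end ParitySign

theorem ballsOddBins_eq (m n : ℕ) (ω : Fin m → Fin n) :
    (ballsOddBins m n ω : ℝ) = -1 / 2 * ∑ i, paritySign {i} ω + n / 2 := by
  have hodd (N : ℕ) : (if Odd N then 1 else 0 : ℝ) = (1 - (-1) ^ N) / 2 := by
    rcases N.even_or_odd with h | h
    · rw [if_neg (Nat.not_odd_iff_even.mpr h), h.neg_one_pow]; norm_num
    · rw [if_pos h, h.neg_one_pow]; norm_num
  rw [ballsOddBins, card_filter, Nat.cast_sum]
  simp only [Nat.cast_ite, Nat.cast_one, Nat.cast_zero, hodd, paritySign, mem_singleton]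
  rw [← sum_div, sum_sub_distrib, sum_const, card_univ, Fintype.card_fin, nsmul_eq_mul]
  ring

/-- Balls-into-bins with `n ≥ 2` bins, all `n^m` outcomes equally likely: the variance of
`z`, the number of bins receiving an odd number of balls, equals
`(n²/4)((1 - 4/n)^m - (1 - 2/n)^{2m}) + (n/4)(1 - (1 - 4/n)^m)`. -/
theorem variance_odd_bins (m n : ℕ) (hn : 2 ≤ n) :
    (∑ ω : Fin m → Fin n, ((ballsOddBins m n ω : ℝ)) ^ 2) / (n : ℝ) ^ m -
        ((∑ ω : Fin m → Fin n, (ballsOddBins m n ω : ℝ)) / (n : ℝ) ^ m) ^ 2 =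
      ((n : ℝ) ^ 2 / 4) * ((1 - 4 / (n : ℝ)) ^ m - (1 - 2 / (n : ℝ)) ^ (2 * m)) +
        ((n : ℝ) / 4) * (1 - (1 - 4 / (n : ℝ)) ^ m) := by
  have hn0 : (n : ℝ) ≠ 0 := Nat.cast_ne_zero.mpr (by omega)
  calc _ = uniformVariance fun ω : Fin m → Fin n => (ballsOddBins m n ω : ℝ) := by
        simp [uniformVariance]
    _ = 1 / 4 * uniformVariance fun ω : Fin m → Fin n => ∑ i, paritySign {i} ω := by
        simp only [ballsOddBins_eq, uniformVariance_affine]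
        norm_num
    _ = _ := by
        simp only [uniformVariance, sum_sq_sum_paritySign_singleton, sum_sum_paritySign_singleton,
          Fintype.card_fin, Fintype.card_pi, prod_const, card_univ, Nat.cast_pow]
        rw [one_sub_div hn0, one_sub_div hn0]
        simp only [div_pow, ← pow_mul]
        field_simp
        ring
end
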